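/- If A, B are n×n matrices over a commutative ELT ring and s(det(AB)) ≠ 0, then det(AB) = det(A)·det(B). -/

import Mathlib

/-- ELT addition on pairs (tangible value, layer). -/
def eltAdd {F L : Type*} [LinearOrder F] [Add L] (x y : F × L) : F × L :=
  if y.1 < x.1 then x else if x.1 < y.1 then y else (x.1, x.2 + y.2)

/-- ELT multiplication on pairs (tangible value, layer). -/
def eltMul {F L : Type*} [Add F] [Mul L] (x y : F × L) : F × L :=
  (x.1 + y.1, x.2 * y.2)

/-- Addition on R̄ = R ∪ {−∞}. -/
def eAdd {F L : Type*} [LinearOrder F] [Add L] :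
    Option (F × L) → Option (F × L) → Option (F × L)
  | none, y => y
  | some a, none => some a
  | some a, some b => some (eltAdd a b)

/-- Multiplication on R̄ = R ∪ {−∞}. -/
def eMul {F L : Type*} [Add F] [Mul L] :
    Option (F × L) → Option (F × L) → Option (F × L)
  | some a, some b => some (eltMul a b)
  | _, _ => none

/-- The layer (sorting map) on R̄; the layer of −∞ is 0. -/
def sBar {F L : Type*} [Zero L] (x : Option (F × L)) : L :=
  (x.map Prod.snd).getD 0

/-- The surpassing relation on R̄. -/
def eSurp {F L : Type*} [LinearOrder F] [Add L] [Zero L]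
    (x y : Option (F × L)) : Prop :=
  ∃ z : Option (F × L), sBar z = 0 ∧ x = eAdd y z

/-- Finite sums in R̄ (the result is independent of the enumeration order since
`eAdd` is commutative and associative with identity −∞). -/
noncomputable def eSumF {F L α : Type*} [Fintype α] [LinearOrder F] [Add L]
    (f : α → Option (F × L)) : Option (F × L) :=
  ((Finset.univ : Finset α).toList.map f).foldr eAdd none

/-- Finite products in R̄. -/
def eProd {F L : Type*} [Zero F] [Add F] [One L] [Mul L] {k : ℕ}
    (f : Fin k → Option (F × L)) : Option (F × L) :=
  (List.ofFn f).foldr eMul (some ((0 : F), (1 : L)))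

/-- The ELT determinant, with sgn(σ) interpreted as the layer element (0, ±1). -/
noncomputable def eltDet {F L : Type*} [AddCommGroup F] [LinearOrder F] [IsOrderedAddMonoid F] [CommRing L] {n : ℕ}
    (A : Matrix (Fin n) (Fin n) (Option (F × L))) : Option (F × L) :=
  eSumF fun σ : Equiv.Perm (Fin n) =>
    eMul (some ((0 : F), ((Equiv.Perm.sign σ : ℤ) : L))) (eProd fun i => A i (σ i))

/-- Matrix multiplication over R̄. -/
noncomputable def eMatMul {F L : Type*} [AddCommGroup F] [LinearOrder F] [IsOrderedAddMonoid F] [CommRing L] {n : ℕ}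
    (A B : Matrix (Fin n) (Fin n) (Option (F × L))) :
    Matrix (Fin n) (Fin n) (Option (F × L)) :=
  fun i j => eSumF fun k => eMul (A i k) (B k j)

/-- The identity matrix over R̄. -/
def eId {F L : Type*} [AddCommGroup F] [LinearOrder F] [IsOrderedAddMonoid F] [CommRing L] (n : ℕ) :
    Matrix (Fin n) (Fin n) (Option (F × L)) :=
  fun i j => if i = j then some ((0 : F), (1 : L)) else none

/-!
`R̄ = Option (F × L)` is a commutative semiring, so the usual expansion of `det (A * B)` as a
sum over all maps `p : Fin n → Fin n` is valid. The bijective `p` contribute `det A * det B`.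
For `p` with `p i = p j`, the terms of `σ` and `σ * swap i j` add up to a multiple of
`(0, 1) + (0, -1) = (0, 0)`, hence to a ghost (layer-zero) element, and ghosts form an ideal.
So `det (A * B) = det A * det B + g` with `s(g) = 0`, and adding a ghost to `y` either leaves `y`
unchanged or produces a ghost.
-/

theorem Fintype.sum_eq_sum_filter_add_comp {M α : Type*} [AddCommMonoid M] [Fintype α]
    (e : α ≃ α) (p : α → Prop) [DecidablePred p] (hp : ∀ x, p (e x) ↔ ¬p x) (f : α → M) :
    ∑ x, f x = ∑ x with p x, (f x + f (e x)) := by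
  rw [Finset.sum_add_distrib, ← Finset.sum_filter_add_sum_filter_not Finset.univ p f]
  congr 1
  exact (Finset.sum_equiv e (by simp [hp]) fun _ _ => rfl).symm

theorem Equiv.Perm.sign_mul_swap_eq_one_iff {α : Type*} [Fintype α] [DecidableEq α]
    {σ : Equiv.Perm α} {i j : α} (hij : i ≠ j) :
    sign (σ * Equiv.swap i j) = 1 ↔ ¬sign σ = 1 := by
  rcases Int.units_eq_one_or (sign σ) with h | h <;> simp [h, sign_swap hij]

namespace Matrix

open Finset Equiv Equiv.Perm

variable {R n : Type*} [CommSemiring R] [Fintype n] [DecidableEq n]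

def detWith (ε : Perm n →* R) (A : Matrix n n R) : R :=
  ∑ σ : Perm n, ε σ * ∏ i, A i (σ i)

theorem sum_detWith_mem_of_not_bijective (ε : Perm n →* R) {I : Ideal R}
    (hε : ∀ i j, i ≠ j → 1 + ε (Equiv.swap i j) ∈ I) (A B : Matrix n n R) {p : n → n}
    (hp : ¬Function.Bijective p) :
    ∑ σ : Perm n, ε σ * ∏ x, A x (p x) * B (p x) (σ x) ∈ I := by
  obtain ⟨i, j, hpij, hij⟩ : ∃ i j, p i = p j ∧ i ≠ j := by
    rw [← Finite.injective_iff_bijective, Function.Injective] at hp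
    push Not at hp
    exact hp
  -- `sign σ = 1` picks one permutation from each pair `{σ, σ * swap i j}`
  rw [Fintype.sum_eq_sum_filter_add_comp (Equiv.mulRight (Equiv.swap i j)) (fun σ => sign σ = 1)
    fun σ => sign_mul_swap_eq_one_iff hij]
  refine I.sum_mem fun σ _ => ?_
  have hB : ∏ x, B (p x) ((σ * Equiv.swap i j) x) = ∏ x, B (p x) (σ x) := by
    simpa [apply_swap_eq_self hpij] using Equiv.prod_comp (Equiv.swap i j) fun x => B (p x) (σ x)
  have hpair : ε σ * ∏ x, A x (p x) * B (p x) (σ x)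
      + ε (σ * Equiv.swap i j) * ∏ x, A x (p x) * B (p x) ((σ * Equiv.swap i j) x)
      = (1 + ε (Equiv.swap i j)) * (ε σ * ∏ x, A x (p x) * B (p x) (σ x)) := by
    rw [prod_mul_distrib, prod_mul_distrib, hB, map_mul]
    ring
  simpa only [Equiv.coe_mulRight, hpair] using I.mul_mem_right _ (hε i j hij)

theorem sum_detWith_perm_eq_mul (ε : Perm n →* R) (A B : Matrix n n R) :
    ∑ τ : Perm n, ∑ σ : Perm n, ε σ * ∏ x, A x (τ x) * B (τ x) (σ x)
      = detWith ε A * detWith ε B := by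
  rw [detWith, sum_mul]
  refine sum_congr rfl fun τ _ => ?_
  rw [detWith, mul_sum]
  refine (Fintype.sum_equiv (Equiv.mulRight τ) _ _ fun ρ => ?_).symm
  have hB : ∏ x, B (τ x) ((ρ * τ) x) = ∏ x, B x (ρ x) := Equiv.prod_comp τ fun y => B y (ρ y)
  rw [Equiv.coe_mulRight, prod_mul_distrib, hB, map_mul]
  ring

theorem exists_detWith_mul_eq_add_mem (ε : Perm n →* R) {I : Ideal R}
    (hε : ∀ i j, i ≠ j → 1 + ε (Equiv.swap i j) ∈ I) (A B : Matrix n n R) :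
    ∃ g ∈ I, detWith ε (A * B) = detWith ε A * detWith ε B + g := by
  set t : (n → n) → R := fun p => ∑ σ : Perm n, ε σ * ∏ x, A x (p x) * B (p x) (σ x)
  have hexpand : detWith ε (A * B) = ∑ p, t p := by
    simp only [t, detWith, mul_apply, prod_univ_sum, mul_sum, Fintype.piFinset_univ]
    exact sum_comm
  have hbij : ∑ p with Function.Bijective p, t p = detWith ε A * detWith ε B := by
    rw [← sum_detWith_perm_eq_mul]
    exact sum_bij (fun p h => Equiv.ofBijective p (mem_filter.1 h).2) (fun _ _ => mem_univ _)
      (fun _ _ _ _ h => by injection h)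
      (fun b _ => ⟨b, mem_filter.2 ⟨mem_univ _, b.bijective⟩, coe_fn_injective rfl⟩)
      fun _ _ => rfl
  refine ⟨∑ p with ¬Function.Bijective p, t p, I.sum_mem fun p hp => ?_, ?_⟩
  · exact sum_detWith_mem_of_not_bijective ε hε A B (mem_filter.1 hp).2
  · rw [hexpand, ← hbij, sum_filter_add_sum_filter_not]

end Matrix

section Arithmetic

theorem eMul_comm {F L : Type*} [AddCommMagma F] [CommMagma L] (x y : Option (F × L)) :
    eMul x y = eMul y x := by
  cases x <;> cases y <;> simp [eMul, eltMul, add_comm, mul_comm]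

theorem eMul_assoc {F L : Type*} [AddSemigroup F] [Semigroup L] (x y z : Option (F × L)) :
    eMul (eMul x y) z = eMul x (eMul y z) := by
  cases x <;> cases y <;> cases z <;> simp [eMul, eltMul, add_assoc, mul_assoc]

theorem sBar_eMul {F L : Type*} [Add F] [MulZeroClass L] (x y : Option (F × L)) :
    sBar (eMul x y) = sBar x * sBar y := by
  rcases x with _ | x <;> rcases y with _ | y <;> simp [sBar, eMul, eltMul]

variable {F L : Type*} [LinearOrder F]

theorem eltAdd_comm [AddCommMagma L] (x y : F × L) : eltAdd x y = eltAdd y x := by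
  obtain ⟨a, a'⟩ := x; obtain ⟨b, b'⟩ := y
  simp only [eltAdd]
  split_ifs <;> grind [add_comm]

theorem eltAdd_assoc [AddSemigroup L] (x y z : F × L) :
    eltAdd (eltAdd x y) z = eltAdd x (eltAdd y z) := by
  obtain ⟨a, a'⟩ := x; obtain ⟨b, b'⟩ := y; obtain ⟨c, c'⟩ := z
  simp only [eltAdd]
  split_ifs <;> grind [add_assoc]

theorem eAdd_comm [AddCommMagma L] (x y : Option (F × L)) : eAdd x y = eAdd y x := by
  cases x <;> cases y <;> simp only [eAdd, eltAdd_comm]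

theorem eAdd_assoc [AddSemigroup L] (x y z : Option (F × L)) :
    eAdd (eAdd x y) z = eAdd x (eAdd y z) := by
  cases x <;> cases y <;> cases z <;> simp only [eAdd, eltAdd_assoc]

theorem eltMul_eltAdd [AddCommMonoid F] [IsOrderedCancelAddMonoid F] [Distrib L]
    (x y z : F × L) : eltMul x (eltAdd y z) = eltAdd (eltMul x y) (eltMul x z) := by
  obtain ⟨a, a'⟩ := x; obtain ⟨b, b'⟩ := y; obtain ⟨c, c'⟩ := z
  simp only [eltMul, eltAdd, add_lt_add_iff_left]
  split_ifs <;> simp [mul_add]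

theorem eMul_eAdd [AddCommMonoid F] [IsOrderedCancelAddMonoid F] [Distrib L]
    (x y z : Option (F × L)) : eMul x (eAdd y z) = eAdd (eMul x y) (eMul x z) := by
  cases x <;> cases y <;> cases z <;> simp only [eMul, eAdd, eltMul_eltAdd]

theorem sBar_eAdd_eq_zero [AddZeroClass L] {x y : Option (F × L)}
    (hx : sBar x = 0) (hy : sBar y = 0) : sBar (eAdd x y) = 0 := by
  rcases x with _ | ⟨a, a'⟩ <;> rcases y with _ | ⟨b, b'⟩
  · rfl
  · exact hy
  · exact hx
  · simp only [sBar, eAdd, eltAdd, Option.map_some, Option.getD_some] at hx hy ⊢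
    split_ifs <;> simp [hx, hy]

theorem eSurp.eq_of_sBar_ne_zero [AddZeroClass L] {x y : Option (F × L)} (hxy : eSurp x y)
    (hx : sBar x ≠ 0) : x = y := by
  obtain ⟨z, hz, rfl⟩ := hxy
  rcases y with _ | ⟨a, a'⟩ <;> rcases z with _ | ⟨b, b'⟩ <;>
    simp only [sBar, Option.map_some, Option.getD_some] at hz
  · rfl
  · exact absurd hz hx
  · rfl
  · simp only [eAdd, eltAdd, sBar] at hx ⊢
    split_ifs at hx ⊢ <;> simp_all

end Arithmetic

instance {F L : Type*} [LinearOrder F] [Add L] : Add (Option (F × L)) := ⟨eAdd⟩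
instance {F L : Type*} : Zero (Option (F × L)) := ⟨none⟩
instance {F L : Type*} [Add F] [Mul L] : Mul (Option (F × L)) := ⟨eMul⟩
instance {F L : Type*} [Zero F] [One L] : One (Option (F × L)) := ⟨some (0, 1)⟩

section Semiring

variable {F L : Type*} [AddCommMonoid F] [LinearOrder F] [IsOrderedCancelAddMonoid F]
  [CommSemiring L]

instance : CommSemiring (Option (F × L)) where
  add_assoc := eAdd_assoc
  zero_add x := by cases x <;> rfl
  add_zero x := by cases x <;> rfl
  add_comm := eAdd_comm
  nsmul := nsmulRec
  mul_assoc := eMul_assoc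
  one_mul x := show eMul (some (0, 1)) x = x by cases x <;> simp [eMul, eltMul]
  mul_one x := show eMul x (some (0, 1)) = x by cases x <;> simp [eMul, eltMul]
  mul_comm := eMul_comm
  zero_mul x := by cases x <;> rfl
  mul_zero x := by cases x <;> rfl
  left_distrib := eMul_eAdd
  right_distrib x y z := show eMul (eAdd x y) z = eAdd (eMul x z) (eMul y z) by
    rw [eMul_comm, eMul_eAdd, eMul_comm z, eMul_comm z]

theorem eSumF_eq_sum {α : Type*} [Fintype α] (f : α → Option (F × L)) :
    eSumF f = ∑ a, f a := by
  rw [eSumF, ← Finset.sum_map_toList, List.sum_eq_foldr]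
  rfl

theorem eProd_eq_prod {k : ℕ} (f : Fin k → Option (F × L)) : eProd f = ∏ i, f i := by
  rw [eProd, ← List.prod_ofFn, List.prod_eq_foldr]
  rfl

def ghostIdeal : Ideal (Option (F × L)) where
  carrier := {x | sBar x = 0}
  add_mem' := sBar_eAdd_eq_zero
  zero_mem' := rfl
  smul_mem' c x (hx : sBar x = 0) := show sBar (eMul c x) = 0 by rw [sBar_eMul, hx, mul_zero]

end Semiring

section Ring

variable {F L : Type*} [AddCommGroup F] [LinearOrder F] [IsOrderedAddMonoid F] [CommRing L]

def layerSign (ι : Type*) [Fintype ι] [DecidableEq ι] : Equiv.Perm ι →* Option (F × L) where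
  toFun σ := some (0, ((Equiv.Perm.sign σ : ℤ) : L))
  map_one' := show _ = some (0, 1) by simp
  map_mul' σ τ := show _ = some (eltMul _ _) by simp [eltMul]

theorem one_add_layerSign_swap_mem_ghostIdeal {ι : Type*} [Fintype ι] [DecidableEq ι] {i j : ι}
    (hij : i ≠ j) :
    1 + (layerSign ι : Equiv.Perm ι →* Option (F × L)) (Equiv.swap i j) ∈ ghostIdeal := by
  show sBar (eAdd (some (0, 1)) (some (0, _))) = 0
  simp [Equiv.Perm.sign_swap hij, eAdd, eltAdd, sBar]

theorem eMatMul_eq_mul {n : ℕ} (A B : Matrix (Fin n) (Fin n) (Option (F × L))) :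
    eMatMul A B = A * B := by
  ext i j
  rw [eMatMul, eSumF_eq_sum, Matrix.mul_apply]
  rfl

theorem eltDet_eq_detWith {n : ℕ} (A : Matrix (Fin n) (Fin n) (Option (F × L))) :
    eltDet A = A.detWith (layerSign (Fin n)) := by
  rw [eltDet, eSumF_eq_sum]
  refine Finset.sum_congr rfl fun σ _ => ?_
  rw [eProd_eq_prod]
  rfl

theorem eSurp_eltDet_eMatMul {n : ℕ} (A B : Matrix (Fin n) (Fin n) (Option (F × L))) :
    eSurp (eltDet (eMatMul A B)) (eMul (eltDet A) (eltDet B)) := by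
  obtain ⟨g, hg, h⟩ := Matrix.exists_detWith_mul_eq_add_mem (layerSign (Fin n))
    (fun _ _ => one_add_layerSign_swap_mem_ghostIdeal) A B
  refine ⟨g, hg, ?_⟩
  rwa [eltDet_eq_detWith, eMatMul_eq_mul, eltDet_eq_detWith, eltDet_eq_detWith]

end Ring

/-- If s(det(AB)) ≠ 0 then det(AB) = det(A)·det(B). -/
theorem eltDet_mul_of_nonzero_layer {F L : Type*} [AddCommGroup F] [LinearOrder F] [IsOrderedAddMonoid F]
    [CommRing L] {n : ℕ} (A B : Matrix (Fin n) (Fin n) (Option (F × L)))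
    (h : sBar (eltDet (eMatMul A B)) ≠ 0) :
    eltDet (eMatMul A B) = eMul (eltDet A) (eltDet B) :=
  (eSurp_eltDet_eMatMul A B).eq_of_sBar_ne_zero h
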